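/- arXiv:2107.08209 — 5 statements merged into one kernel-verified Lean document; each statement's English description precedes it below -/
import Mathlib

section
/- Let μ be a σ-finite measure on 𝔛, let f₀, f₁ be strictly positive probability density functions with respect to μ, let q ∈ (0,1), set f⁽ᑫ⁾ = (1−q)f₀ + q·f₁ and η(x) = q·f₁(x)/f⁽ᑫ⁾(x), and assume Var_{f⁽ᑫ⁾}[η] > 0. Then the asymptotic variance of the maximum likelihood estimator of q satisfies (∫ ((f₁(x) − f₀(x))/f⁽ᑫ⁾(x))² f⁽ᑫ⁾(x) dμ(x))⁻¹ = q²(1−q)² / Var_{f⁽ᑫ⁾}[η]. -/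
open MeasureTheory

/-- The asymptotic variance of the MLE of the prevalence `q` (the inverse Fisher
information) equals `q²(1−q)² / Var[η]` where `η` is the posterior class probability. -/
theorem asymptotic_variance_MLE
    {𝔛 : Type*} [MeasurableSpace 𝔛] (μ : Measure 𝔛) [SigmaFinite μ]
    (f₀ f₁ : 𝔛 → ℝ) (hf₀m : Measurable f₀) (hf₁m : Measurable f₁)
    (hf₀pos : ∀ x, 0 < f₀ x) (hf₁pos : ∀ x, 0 < f₁ x)
    (hf₀int : ∫ x, f₀ x ∂μ = 1) (hf₁int : ∫ x, f₁ x ∂μ = 1)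
    (q : ℝ) (hq : q ∈ Set.Ioo (0 : ℝ) 1)
    (fq η : 𝔛 → ℝ)
    (hfq : ∀ x, fq x = (1 - q) * f₀ x + q * f₁ x)
    (hη : ∀ x, η x = q * f₁ x / fq x)
    (hvar : 0 < ∫ x, (η x) ^ 2 * fq x ∂μ - (∫ x, η x * fq x ∂μ) ^ 2) :
    (∫ x, ((f₁ x - f₀ x) / fq x) ^ 2 * fq x ∂μ)⁻¹ =
      q ^ 2 * (1 - q) ^ 2 /
        (∫ x, (η x) ^ 2 * fq x ∂μ - (∫ x, η x * fq x ∂μ) ^ 2) := by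
  obtain ⟨hq0, hq1⟩ := hq
  have hq1' : (0:ℝ) < 1 - q := by linarith
  have hfqpos : ∀ x, 0 < fq x := fun x => by
    rw [hfq]
    nlinarith [mul_pos hq1' (hf₀pos x), mul_pos hq0 (hf₁pos x)]
  have hf₀i : Integrable f₀ μ := by
    by_contra h; rw [integral_undef h] at hf₀int; norm_num at hf₀int
  have hf₁i : Integrable f₁ μ := by
    by_contra h; rw [integral_undef h] at hf₁int; norm_num at hf₁int
  have hfqi : Integrable fq μ := by
    have : Integrable (fun x => (1 - q) * f₀ x + q * f₁ x) μ :=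
      (hf₀i.const_mul _).add (hf₁i.const_mul _)
    exact this.congr (Filter.Eventually.of_forall fun x => (hfq x).symm)
  have hfqm : Measurable fq := by
    have h : fq = fun x => (1 - q) * f₀ x + q * f₁ x := funext hfq
    rw [h]; exact (hf₀m.const_mul _).add (hf₁m.const_mul _)
  have hηm : Measurable η := by
    have h : η = fun x => q * f₁ x / fq x := funext hη
    rw [h]; exact (hf₁m.const_mul _).div hfqm
  have hηfq : ∀ x, η x * fq x = q * f₁ x := fun x => by
    rw [hη]; field_simp [(hfqpos x).ne']
  have hηfqi : Integrable (fun x => η x * fq x) μ :=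
    (hf₁i.const_mul q).congr (Filter.Eventually.of_forall fun x => (hηfq x).symm)
  have hI1 : ∫ x, η x * fq x ∂μ = q := by
    simp_rw [hηfq]
    rw [integral_const_mul, hf₁int, mul_one]
  have hfqint : ∫ x, fq x ∂μ = 1 := by
    simp_rw [hfq]
    rw [integral_add (hf₀i.const_mul _) (hf₁i.const_mul _), integral_const_mul,
      integral_const_mul, hf₀int, hf₁int]
    ring
  have hη2i : Integrable (fun x => (η x) ^ 2 * fq x) μ := by
    refine (hf₁i.const_mul q).mono ((hηm.pow_const 2).mul hfqm).aestronglyMeasurable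
      (Filter.Eventually.of_forall fun x => ?_)
    have h1 : 0 < fq x := hfqpos x
    have h3 : 0 ≤ η x := le_of_lt (by rw [hη]; exact div_pos (mul_pos hq0 (hf₁pos x)) h1)
    have h2 : η x ≤ 1 := by
      rw [hη, div_le_one h1, hfq]
      nlinarith [mul_pos hq1' (hf₀pos x)]
    have h4 : 0 ≤ q * f₁ x := (mul_pos hq0 (hf₁pos x)).le
    rw [Real.norm_eq_abs, Real.norm_eq_abs,
      abs_of_nonneg (mul_nonneg (pow_nonneg h3 2) h1.le), abs_of_nonneg h4, ← hηfq x]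
    nlinarith [mul_nonneg (mul_nonneg h3 (by linarith : 0 ≤ 1 - η x)) h1.le]
  have key : ∀ x, ((f₁ x - f₀ x) / fq x) ^ 2 * fq x
      = (q ^ 2 * (1 - q) ^ 2)⁻¹ *
        ((η x) ^ 2 * fq x - 2 * q * (η x * fq x) + q ^ 2 * fq x) := by
    intro x
    have h1 : fq x ≠ 0 := (hfqpos x).ne'
    rw [hη x]
    rw [hfq x] at h1 ⊢
    field_simp
    ring
  have hmain : ∫ x, ((f₁ x - f₀ x) / fq x) ^ 2 * fq x ∂μ
      = (q ^ 2 * (1 - q) ^ 2)⁻¹ * ((∫ x, (η x) ^ 2 * fq x ∂μ) - q ^ 2) := by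
    rw [integral_congr_ae (Filter.Eventually.of_forall key), integral_const_mul]
    congr 1
    have hsub : Integrable (fun x => (η x) ^ 2 * fq x - 2 * q * (η x * fq x)) μ :=
      hη2i.sub (hηfqi.const_mul (2 * q))
    have hcm : Integrable (fun x => q ^ 2 * fq x) μ := hfqi.const_mul _
    rw [integral_add hsub hcm, integral_sub hη2i (hηfqi.const_mul (2 * q)),
      integral_const_mul, integral_const_mul, hI1, hfqint]
    ring
  rw [hmain, hI1, mul_inv, inv_inv, div_eq_mul_inv, mul_comm]
end

section
/- Let z₁,…,zₙ ∈ 𝔛 and let f₀, f₁ : 𝔛 → ℝ satisfy f₀(zᵢ) > 0 and f₁(zᵢ) > 0 for all i, and suppose there exists j with f₁(z_j) ≠ f₀(z_j). Then the likelihood function Lₙ(q) = ∏ᵢ₌₁ⁿ (q·(f₁(zᵢ) − f₀(zᵢ)) + f₀(zᵢ)) attains its absolute maximum over [0,1] at a unique point q* ∈ [0,1]; hence the maximum likelihood estimate of the positive class prevalence is well defined. -/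
open MeasureTheory Finset

/-- Under condition (c2) (`f₁(z_j) ≠ f₀(z_j)` for some `j`), the likelihood
`Lₙ(q) = ∏ᵢ (q·(f₁(zᵢ) − f₀(zᵢ)) + f₀(zᵢ))` attains its absolute maximum over `[0,1]`
at a unique point, so the ML estimate of the prevalence is well defined. -/
theorem likelihood_unique_maximizer
    {𝔛 : Type*} (n : ℕ) (z : Fin n → 𝔛) (f₀ f₁ : 𝔛 → ℝ)
    (hf₀ : ∀ i, 0 < f₀ (z i)) (hf₁ : ∀ i, 0 < f₁ (z i))
    (hj : ∃ j : Fin n, f₁ (z j) ≠ f₀ (z j)) :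
    ∃ qs ∈ Set.Icc (0 : ℝ) 1,
      (∀ q ∈ Set.Icc (0 : ℝ) 1,
        ∏ i : Fin n, (q * (f₁ (z i) - f₀ (z i)) + f₀ (z i)) ≤
          ∏ i : Fin n, (qs * (f₁ (z i) - f₀ (z i)) + f₀ (z i))) ∧
      ∀ q ∈ Set.Icc (0 : ℝ) 1, q ≠ qs →
        ∏ i : Fin n, (q * (f₁ (z i) - f₀ (z i)) + f₀ (z i)) <
          ∏ i : Fin n, (qs * (f₁ (z i) - f₀ (z i)) + f₀ (z i)) := by
  classical
  set g : ℝ → ℝ := fun q => ∏ i : Fin n, (q * (f₁ (z i) - f₀ (z i)) + f₀ (z i)) with hg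
  -- positivity of factors on [0,1]
  have hpos : ∀ q ∈ Set.Icc (0:ℝ) 1, ∀ i : Fin n,
      0 < q * (f₁ (z i) - f₀ (z i)) + f₀ (z i) := by
    intro q hq i
    rcases eq_or_lt_of_le hq.1 with h0 | h0
    · simp only [← h0, zero_mul, zero_add]; exact hf₀ i
    · nlinarith [mul_pos h0 (hf₁ i), mul_nonneg (sub_nonneg.2 hq.2) (hf₀ i).le]
  have hgpos : ∀ q ∈ Set.Icc (0:ℝ) 1, 0 < g q := fun q hq =>
    Finset.prod_pos fun i _ => hpos q hq i
  have hcont : Continuous g := by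
    apply continuous_finset_prod
    intro i _
    continuity
  obtain ⟨qs, hqs, hmax⟩ := isCompact_Icc.exists_isMaxOn (Set.nonempty_Icc.2 zero_le_one)
    hcont.continuousOn
  have hmax' : ∀ q ∈ Set.Icc (0:ℝ) 1, g q ≤ g qs := fun q hq => hmax hq
  refine ⟨qs, hqs, hmax', ?_⟩
  intro q hq hne
  rcases lt_or_eq_of_le (hmax' q hq) with h | h
  · exact h
  · -- midpoint trick gives a contradiction
    exfalso
    obtain ⟨j, hjne⟩ := hj
    set m : ℝ := (q + qs) / 2 with hm
    have hmIcc : m ∈ Set.Icc (0:ℝ) 1 := by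
      constructor
      · have := hq.1; have := hqs.1; simp only [hm]; linarith
      · have := hq.2; have := hqs.2; simp only [hm]; linarith
    have key : g qs * g qs < g m ^ 2 := by
      have h1 : g q * g qs < g m ^ 2 := by
        have : g m ^ 2 = ∏ i : Fin n, (m * (f₁ (z i) - f₀ (z i)) + f₀ (z i)) ^ 2 := by
          rw [hg, ← Finset.prod_pow]
        rw [this, hg, ← Finset.prod_mul_distrib]
        apply Finset.prod_lt_prod
        · intro i _
          exact mul_pos (hpos q hq i) (hpos qs hqs i)
        · intro i _
          simp only [hm]
          nlinarith [sq_nonneg ((q - qs) * (f₁ (z i) - f₀ (z i)))]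
        · refine ⟨j, Finset.mem_univ j, ?_⟩
          have hne' : (q - qs) * (f₁ (z j) - f₀ (z j)) ≠ 0 :=
            mul_ne_zero (sub_ne_zero.2 hne) (sub_ne_zero.2 hjne)
          have hsq := pow_pos (abs_pos.2 hne') 2
          rw [sq_abs] at hsq
          simp only [hm]
          nlinarith [hsq]
      rwa [h] at h1
    have hle : g m ≤ g qs := hmax' m hmIcc
    have : g m ^ 2 ≤ g qs * g qs := by
      nlinarith [hgpos m hmIcc, hgpos qs hqs]
    linarith
end

section
/- Let z₁,…,zₙ ∈ 𝔛 and let f₀, f₁ : 𝔛 → ℝ satisfy f₀(zᵢ) > 0 and f₁(zᵢ) > 0 for all i, and suppose there exists j with f₁(z_j) ≠ f₀(z_j). Then the equation Σᵢ₌₁ⁿ (f₁(zᵢ) − f₀(zᵢ)) / (q·(f₁(zᵢ) − f₀(zᵢ)) + f₀(zᵢ)) = 0 has a solution q ∈ (0,1) if and only if (1/n)·Σᵢ₌₁ⁿ f₁(zᵢ)/f₀(zᵢ) > 1 and (1/n)·Σᵢ₌₁ⁿ f₀(zᵢ)/f₁(zᵢ) > 1; moreover, when it exists, this solution is the unique point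 of [0,1] at which Lₙ(q) = ∏ᵢ₌₁ⁿ (q·(f₁(zᵢ) − f₀(zᵢ)) + f₀(zᵢ)) attains its absolute maximum over [0,1]. -/
open MeasureTheory Finset

private lemma lik_gpos {a b q : ℝ} (ha : 0 < a) (hb : 0 < b) (h0 : 0 ≤ q) (h1 : q ≤ 1) :
    0 < q * (b - a) + a := by
  nlinarith [mul_nonneg h0 hb.le, mul_nonneg (sub_nonneg.mpr h1) ha.le]

/-- Maximality: if the first-order condition holds at `q ∈ (0,1)`, the likelihood at any
other `q' ∈ [0,1]` is strictly smaller. -/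
private lemma lik_max_aux {n : ℕ} (a b : Fin n → ℝ) (ha : ∀ i, 0 < a i) (hb : ∀ i, 0 < b i)
    (j : Fin n) (hjj : b j ≠ a j) {q q' : ℝ} (hq : q ∈ Set.Ioo (0 : ℝ) 1)
    (hS : ∑ i : Fin n, (b i - a i) / (q * (b i - a i) + a i) = 0)
    (hq' : q' ∈ Set.Icc (0 : ℝ) 1) (hne : q' ≠ q) :
    ∏ i : Fin n, (q' * (b i - a i) + a i) < ∏ i : Fin n, (q * (b i - a i) + a i) := by
  have hgpos : ∀ i, 0 < q * (b i - a i) + a i :=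
    fun i => lik_gpos (ha i) (hb i) hq.1.le hq.2.le
  set x : Fin n → ℝ := fun i => (q' - q) * (b i - a i) / (q * (b i - a i) + a i) with hx
  have hsum : ∑ i : Fin n, x i = 0 := by
    have h1 : ∑ i : Fin n, x i
        = (q' - q) * ∑ i : Fin n, (b i - a i) / (q * (b i - a i) + a i) := by
      rw [Finset.mul_sum]
      exact Finset.sum_congr rfl fun i _ => by rw [hx]; ring
    rw [h1, hS, mul_zero]
  have hid : ∀ i, q' * (b i - a i) + a i = (q * (b i - a i) + a i) * (1 + x i) := by
    intro i
    have hxi : (q * (b i - a i) + a i) * x i = (q' - q) * (b i - a i) := by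
      rw [hx, mul_comm]
      exact div_mul_cancel₀ _ (hgpos i).ne'
    rw [mul_add, mul_one, hxi]
    ring
  have hle : ∀ i, q' * (b i - a i) + a i ≤ (q * (b i - a i) + a i) * Real.exp (x i) := by
    intro i
    rw [hid i]
    exact mul_le_mul_of_nonneg_left (by linarith [Real.add_one_le_exp (x i)]) (hgpos i).le
  have hltj : q' * (b j - a j) + a j < (q * (b j - a j) + a j) * Real.exp (x j) := by
    have hxj : x j ≠ 0 := by
      rw [hx]
      exact div_ne_zero (mul_ne_zero (sub_ne_zero.mpr hne) (sub_ne_zero.mpr hjj)) (hgpos j).ne'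
    rw [hid j]
    exact mul_lt_mul_of_pos_left (by linarith [Real.add_one_lt_exp hxj]) (hgpos j)
  calc ∏ i : Fin n, (q' * (b i - a i) + a i)
      < ∏ i : Fin n, (q * (b i - a i) + a i) * Real.exp (x i) := by
        refine Finset.prod_lt_prod (fun i _ => ?_) (fun i _ => hle i) ⟨j, mem_univ j, hltj⟩
        exact lik_gpos (ha i) (hb i) hq'.1 hq'.2
    _ = (∏ i : Fin n, (q * (b i - a i) + a i)) * Real.exp (∑ i : Fin n, x i) := by
        rw [Finset.prod_mul_distrib, Real.exp_sum]
    _ = ∏ i : Fin n, (q * (b i - a i) + a i) := by rw [hsum, Real.exp_zero, mul_one]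

private lemma lik_main {n : ℕ} (a b : Fin n → ℝ) (ha : ∀ i, 0 < a i) (hb : ∀ i, 0 < b i)
    (hj : ∃ j : Fin n, b j ≠ a j) :
    ((∃ q ∈ Set.Ioo (0 : ℝ) 1,
        ∑ i : Fin n, (b i - a i) / (q * (b i - a i) + a i) = 0) ↔
      (1 < (1 / (n : ℝ)) * ∑ i : Fin n, b i / a i ∧
        1 < (1 / (n : ℝ)) * ∑ i : Fin n, a i / b i)) ∧
    ∀ q ∈ Set.Ioo (0 : ℝ) 1,
      (∑ i : Fin n, (b i - a i) / (q * (b i - a i) + a i) = 0) →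
      ∀ q' ∈ Set.Icc (0 : ℝ) 1, q' ≠ q →
        ∏ i : Fin n, (q' * (b i - a i) + a i) <
          ∏ i : Fin n, (q * (b i - a i) + a i) := by
  obtain ⟨j, hjj⟩ := hj
  have hn : (0 : ℝ) < n := by exact_mod_cast Fin.pos j
  have hA : ∑ i : Fin n, (b i - a i) / a i = (∑ i : Fin n, b i / a i) - n := by
    calc ∑ i : Fin n, (b i - a i) / a i = ∑ i : Fin n, (b i / a i - 1) :=
          Finset.sum_congr rfl fun i _ => by rw [sub_div, div_self (ha i).ne']
      _ = (∑ i : Fin n, b i / a i) - n := by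
          rw [Finset.sum_sub_distrib, Finset.sum_const, card_univ, Fintype.card_fin,
            nsmul_eq_mul, mul_one]
  have hB : ∑ i : Fin n, (b i - a i) / b i = (n : ℝ) - ∑ i : Fin n, a i / b i := by
    calc ∑ i : Fin n, (b i - a i) / b i = ∑ i : Fin n, (1 - a i / b i) :=
          Finset.sum_congr rfl fun i _ => by rw [sub_div, div_self (hb i).ne']
      _ = (n : ℝ) - ∑ i : Fin n, a i / b i := by
          rw [Finset.sum_sub_distrib, Finset.sum_const, card_univ, Fintype.card_fin,
            nsmul_eq_mul, mul_one]
  -- strict monotone comparisons of the score sum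
  have hmono0 : ∀ q ∈ Set.Ioo (0 : ℝ) 1,
      ∑ i : Fin n, (b i - a i) / (q * (b i - a i) + a i) < ∑ i : Fin n, (b i - a i) / a i := by
    intro q hq
    have hgpos : ∀ i, 0 < q * (b i - a i) + a i :=
      fun i => lik_gpos (ha i) (hb i) hq.1.le hq.2.le
    have key : ∀ i : Fin n, (b i - a i) / a i - (b i - a i) / (q * (b i - a i) + a i)
        = q * (b i - a i) ^ 2 / (a i * (q * (b i - a i) + a i)) := by
      intro i
      rw [div_sub_div _ _ (ha i).ne' (hgpos i).ne', div_eq_div_iff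
        (mul_pos (ha i) (hgpos i)).ne' (mul_pos (ha i) (hgpos i)).ne']
      ring
    refine Finset.sum_lt_sum (fun i _ => ?_) ⟨j, mem_univ j, ?_⟩
    · have hnn : 0 ≤ q * (b i - a i) ^ 2 / (a i * (q * (b i - a i) + a i)) :=
        div_nonneg (mul_nonneg hq.1.le (sq_nonneg _)) (mul_pos (ha i) (hgpos i)).le
      linarith [key i]
    · have hpos : 0 < q * (b j - a j) ^ 2 / (a j * (q * (b j - a j) + a j)) :=
        div_pos (mul_pos hq.1 (sq_pos_of_ne_zero (sub_ne_zero.mpr hjj)))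
          (mul_pos (ha j) (hgpos j))
      linarith [key j]
  have hmono1 : ∀ q ∈ Set.Ioo (0 : ℝ) 1,
      ∑ i : Fin n, (b i - a i) / b i < ∑ i : Fin n, (b i - a i) / (q * (b i - a i) + a i) := by
    intro q hq
    have hgpos : ∀ i, 0 < q * (b i - a i) + a i :=
      fun i => lik_gpos (ha i) (hb i) hq.1.le hq.2.le
    have key : ∀ i : Fin n, (b i - a i) / (q * (b i - a i) + a i) - (b i - a i) / b i
        = (1 - q) * (b i - a i) ^ 2 / ((q * (b i - a i) + a i) * b i) := by
      intro i
      rw [div_sub_div _ _ (hgpos i).ne' (hb i).ne', div_eq_div_iff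
        (mul_pos (hgpos i) (hb i)).ne' (mul_pos (hgpos i) (hb i)).ne']
      ring
    refine Finset.sum_lt_sum (fun i _ => ?_) ⟨j, mem_univ j, ?_⟩
    · have hnn : 0 ≤ (1 - q) * (b i - a i) ^ 2 / ((q * (b i - a i) + a i) * b i) :=
        div_nonneg (mul_nonneg (by linarith [hq.2]) (sq_nonneg _))
          (mul_pos (hgpos i) (hb i)).le
      linarith [key i]
    · have hpos : 0 < (1 - q) * (b j - a j) ^ 2 / ((q * (b j - a j) + a j) * b j) :=
        div_pos (mul_pos (by linarith [hq.2]) (sq_pos_of_ne_zero (sub_ne_zero.mpr hjj)))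
          (mul_pos (hgpos j) (hb j))
      linarith [key j]
  constructor
  · constructor
    · rintro ⟨q, hq, hSq⟩
      have h0 : 0 < ∑ i : Fin n, (b i - a i) / a i := by
        have := hmono0 q hq; linarith
      have h1 : ∑ i : Fin n, (b i - a i) / b i < 0 := by
        have := hmono1 q hq; linarith
      rw [hA] at h0
      rw [hB] at h1
      constructor
      · rw [one_div, ← div_eq_inv_mul, lt_div_iff₀ hn, one_mul]
        linarith
      · rw [one_div, ← div_eq_inv_mul, lt_div_iff₀ hn, one_mul]
        linarith
    · rintro ⟨h0, h1⟩
      rw [one_div, ← div_eq_inv_mul, lt_div_iff₀ hn, one_mul] at h0 h1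
      set S : ℝ → ℝ := fun q => ∑ i : Fin n, (b i - a i) / (q * (b i - a i) + a i) with hSdef
      have hS0 : 0 < S 0 := by
        have : S 0 = ∑ i : Fin n, (b i - a i) / a i := by
          rw [hSdef]
          exact Finset.sum_congr rfl fun i _ => by norm_num
        rw [this, hA]; linarith
      have hS1 : S 1 < 0 := by
        have : S 1 = ∑ i : Fin n, (b i - a i) / b i := by
          rw [hSdef]
          exact Finset.sum_congr rfl fun i _ => by rw [one_mul, sub_add_cancel]
        rw [this, hB]; linarith
      have hcont : ContinuousOn S (Set.Icc (0 : ℝ) 1) := by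
        rw [hSdef]
        refine continuousOn_finset_sum _ fun i _ => ?_
        refine ContinuousOn.div continuousOn_const ?_ ?_
        · exact ((continuous_id.mul continuous_const).add continuous_const).continuousOn
        · intro q hq
          exact (lik_gpos (ha i) (hb i) hq.1 hq.2).ne'
      obtain ⟨q, hq, hSq⟩ := intermediate_value_Ioo' (zero_le_one) hcont ⟨hS1, hS0⟩
      exact ⟨q, hq, hSq⟩
  · intro q hq hSq q' hq' hne
    exact lik_max_aux a b ha hb j hjj hq hSq hq' hne

/-- The first-order condition `Σᵢ (f₁(zᵢ) − f₀(zᵢ))/(q·(f₁(zᵢ) − f₀(zᵢ)) + f₀(zᵢ)) = 0`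
has a solution `q ∈ (0,1)` iff `(1/n)·Σᵢ f₁(zᵢ)/f₀(zᵢ) > 1` and
`(1/n)·Σᵢ f₀(zᵢ)/f₁(zᵢ) > 1`; moreover any such solution is the unique point of `[0,1]`
at which the likelihood `Lₙ` attains its absolute maximum over `[0,1]`. -/
theorem likelihood_interior_maximizer_iff
    {𝔛 : Type*} (n : ℕ) (z : Fin n → 𝔛) (f₀ f₁ : 𝔛 → ℝ)
    (hf₀ : ∀ i, 0 < f₀ (z i)) (hf₁ : ∀ i, 0 < f₁ (z i))
    (hj : ∃ j : Fin n, f₁ (z j) ≠ f₀ (z j)) :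
    ((∃ q ∈ Set.Ioo (0 : ℝ) 1,
        ∑ i : Fin n, (f₁ (z i) - f₀ (z i)) / (q * (f₁ (z i) - f₀ (z i)) + f₀ (z i)) = 0) ↔
      (1 < (1 / (n : ℝ)) * ∑ i : Fin n, f₁ (z i) / f₀ (z i) ∧
        1 < (1 / (n : ℝ)) * ∑ i : Fin n, f₀ (z i) / f₁ (z i))) ∧
    ∀ q ∈ Set.Ioo (0 : ℝ) 1,
      (∑ i : Fin n, (f₁ (z i) - f₀ (z i)) / (q * (f₁ (z i) - f₀ (z i)) + f₀ (z i)) = 0) →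
      ∀ q' ∈ Set.Icc (0 : ℝ) 1, q' ≠ q →
        ∏ i : Fin n, (q' * (f₁ (z i) - f₀ (z i)) + f₀ (z i)) <
          ∏ i : Fin n, (q * (f₁ (z i) - f₀ (z i)) + f₀ (z i)) := by
  exact lik_main (fun i => f₀ (z i)) (fun i => f₁ (z i)) hf₀ hf₁ hj
end

section
/- Let z₁,…,zₙ ∈ 𝔛 and let f₀, f₁ : 𝔛 → ℝ satisfy f₀(zᵢ) > 0 and f₁(zᵢ) > 0 for all i, and suppose there exists j with f₁(z_j) ≠ f₀(z_j). If (1/n)·Σᵢ₌₁ⁿ f₁(zᵢ)/f₀(zᵢ) ≤ 1 and (1/n)·Σᵢ₌₁ⁿ f₀(zᵢ)/f₁(zᵢ) > 1, then the likelihood Lₙ(q) = ∏ᵢ₌₁ⁿ (q·(f₁(zᵢ) − f₀(zᵢ)) + f₀(zᵢ)) attains its unique absolute maximum over [0,1] at q = 0. -/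
open MeasureTheory Finset

/-- Under condition (c3) (`(1/n)·Σᵢ f₁(zᵢ)/f₀(zᵢ) ≤ 1` and `(1/n)·Σᵢ f₀(zᵢ)/f₁(zᵢ) > 1`),
the likelihood `Lₙ(q) = ∏ᵢ (q·(f₁(zᵢ) − f₀(zᵢ)) + f₀(zᵢ))` attains its unique absolute
maximum over `[0,1]` at `q = 0`. -/
theorem likelihood_max_at_zero
    {𝔛 : Type*} (n : ℕ) (z : Fin n → 𝔛) (f₀ f₁ : 𝔛 → ℝ)
    (hf₀ : ∀ i, 0 < f₀ (z i)) (hf₁ : ∀ i, 0 < f₁ (z i))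
    (hj : ∃ j : Fin n, f₁ (z j) ≠ f₀ (z j))
    (hc3a : (1 / (n : ℝ)) * ∑ i : Fin n, f₁ (z i) / f₀ (z i) ≤ 1)
    (hc3b : 1 < (1 / (n : ℝ)) * ∑ i : Fin n, f₀ (z i) / f₁ (z i)) :
    ∀ q ∈ Set.Icc (0 : ℝ) 1, q ≠ 0 →
      ∏ i : Fin n, (q * (f₁ (z i) - f₀ (z i)) + f₀ (z i)) <
        ∏ i : Fin n, ((0 : ℝ) * (f₁ (z i) - f₀ (z i)) + f₀ (z i)) := by
  intro q hq hq0
  obtain ⟨j, hjne⟩ := hj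
  have hn : (0 : ℝ) < n := by
    have : 0 < n := Fin.pos_iff_nonempty.mpr ⟨j⟩
    exact_mod_cast this
  have hqpos : 0 < q := lt_of_le_of_ne hq.1 (Ne.symm hq0)
  -- r i := f₁ / f₀
  set r : Fin n → ℝ := fun i => f₁ (z i) / f₀ (z i) with hr
  have hrpos : ∀ i, 0 < r i := fun i => div_pos (hf₁ i) (hf₀ i)
  -- sum of r ≤ n
  have hsum : ∑ i : Fin n, r i ≤ n := by
    have h := mul_le_mul_of_nonneg_left hc3a hn.le
    rw [mul_one, ← mul_assoc, mul_one_div, div_self hn.ne', one_mul] at h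
    exact h
  -- each factor equals f₀ * (1 + q*(r i - 1))
  have hfact : ∀ i, q * (f₁ (z i) - f₀ (z i)) + f₀ (z i)
      = f₀ (z i) * (1 + q * (r i - 1)) := by
    intro i
    have h0 : f₀ (z i) ≠ 0 := (hf₀ i).ne'
    simp only [hr]
    field_simp
    ring
  have hpos : ∀ i, 0 < q * (f₁ (z i) - f₀ (z i)) + f₀ (z i) := by
    intro i
    rw [hfact i]
    have : 0 < 1 + q * (r i - 1) := by
      have : 1 + q * (r i - 1) = (1 - q) + q * r i := by ring
      rw [this]
      have h1 : 0 ≤ 1 - q := by linarith [hq.2]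
      have h2 : 0 < q * r i := mul_pos hqpos (hrpos i)
      linarith
    exact mul_pos (hf₀ i) this
  -- bound each factor by f₀ * exp(q*(r i - 1))
  have hle : ∀ i, q * (f₁ (z i) - f₀ (z i)) + f₀ (z i)
      ≤ f₀ (z i) * Real.exp (q * (r i - 1)) := by
    intro i
    rw [hfact i]
    exact mul_le_mul_of_nonneg_left (by
      have := Real.add_one_le_exp (q * (r i - 1)); linarith) (hf₀ i).le
  have hltj : q * (f₁ (z j) - f₀ (z j)) + f₀ (z j)
      < f₀ (z j) * Real.exp (q * (r j - 1)) := by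
    rw [hfact j]
    refine mul_lt_mul_of_pos_left ?_ (hf₀ j)
    have hne : q * (r j - 1) ≠ 0 := by
      refine mul_ne_zero hq0 ?_
      have : r j ≠ 1 := by
        simp only [hr]
        intro h
        exact hjne ((div_eq_one_iff_eq (hf₀ j).ne').mp h)
      intro h; apply this; linarith [sub_eq_zero.mp h]
    have := Real.add_one_lt_exp hne
    linarith
  have step1 : ∏ i : Fin n, (q * (f₁ (z i) - f₀ (z i)) + f₀ (z i))
      < ∏ i : Fin n, (f₀ (z i) * Real.exp (q * (r i - 1))) :=
    Finset.prod_lt_prod (fun i _ => hpos i) (fun i _ => hle i)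
      ⟨j, Finset.mem_univ j, hltj⟩
  have step2 : ∏ i : Fin n, (f₀ (z i) * Real.exp (q * (r i - 1)))
      ≤ ∏ i : Fin n, f₀ (z i) := by
    rw [Finset.prod_mul_distrib, ← Real.exp_sum]
    have hsle : ∑ i : Fin n, q * (r i - 1) ≤ 0 := by
      have : ∑ i : Fin n, q * (r i - 1) = q * (∑ i : Fin n, r i - n) := by
        calc ∑ i : Fin n, q * (r i - 1) = ∑ i : Fin n, (q * r i - q) := by
              simp [mul_sub]
          _ = q * ∑ i : Fin n, r i - (n : ℝ) * q := by
              rw [Finset.sum_sub_distrib, ← Finset.mul_sum, Finset.sum_const,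
                Finset.card_univ, Fintype.card_fin, nsmul_eq_mul]
          _ = q * (∑ i : Fin n, r i - n) := by ring
      rw [this]
      exact mul_nonpos_of_nonneg_of_nonpos hqpos.le (by linarith)
    have : Real.exp (∑ i : Fin n, q * (r i - 1)) ≤ 1 := Real.exp_le_one_iff.mpr hsle
    calc (∏ i : Fin n, f₀ (z i)) * Real.exp (∑ i : Fin n, q * (r i - 1))
        ≤ (∏ i : Fin n, f₀ (z i)) * 1 :=
          mul_le_mul_of_nonneg_left this (Finset.prod_nonneg fun i _ => (hf₀ i).le)
      _ = ∏ i : Fin n, f₀ (z i) := mul_one _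
  have : ∏ i : Fin n, ((0 : ℝ) * (f₁ (z i) - f₀ (z i)) + f₀ (z i))
      = ∏ i : Fin n, f₀ (z i) := by simp
  rw [this]
  exact lt_of_lt_of_le step1 step2
end

section
/- Let z₁,…,zₙ ∈ 𝔛 and let f₀, f₁ : 𝔛 → ℝ satisfy f₀(zᵢ) > 0 and f₁(zᵢ) > 0 for all i, and suppose there exists j with f₁(z_j) ≠ f₀(z_j). If (1/n)·Σᵢ₌₁ⁿ f₁(zᵢ)/f₀(zᵢ) > 1 and (1/n)·Σᵢ₌₁ⁿ f₀(zᵢ)/f₁(zᵢ) ≤ 1, then the likelihood Lₙ(q) = ∏ᵢ₌₁ⁿ (q·(f₁(zᵢ) − f₀(zᵢ)) + f₀(zᵢ)) attains its unique absolute maximum over [0,1] at q = 1. -/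
open MeasureTheory Finset

/-- Under condition (c4) (`(1/n)·Σᵢ f₁(zᵢ)/f₀(zᵢ) > 1` and `(1/n)·Σᵢ f₀(zᵢ)/f₁(zᵢ) ≤ 1`),
the likelihood `Lₙ(q) = ∏ᵢ (q·(f₁(zᵢ) − f₀(zᵢ)) + f₀(zᵢ))` attains its unique absolute
maximum over `[0,1]` at `q = 1`. -/
theorem likelihood_max_at_one
    {𝔛 : Type*} (n : ℕ) (z : Fin n → 𝔛) (f₀ f₁ : 𝔛 → ℝ)
    (hf₀ : ∀ i, 0 < f₀ (z i)) (hf₁ : ∀ i, 0 < f₁ (z i))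
    (hj : ∃ j : Fin n, f₁ (z j) ≠ f₀ (z j))
    (hc4a : 1 < (1 / (n : ℝ)) * ∑ i : Fin n, f₁ (z i) / f₀ (z i))
    (hc4b : (1 / (n : ℝ)) * ∑ i : Fin n, f₀ (z i) / f₁ (z i) ≤ 1) :
    ∀ q ∈ Set.Icc (0 : ℝ) 1, q ≠ 1 →
      ∏ i : Fin n, (q * (f₁ (z i) - f₀ (z i)) + f₀ (z i)) <
        ∏ i : Fin n, ((1 : ℝ) * (f₁ (z i) - f₀ (z i)) + f₀ (z i)) := by
  rintro q ⟨hq0, hq1⟩ hqne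
  obtain ⟨j, hjne⟩ := hj
  have hn : 0 < (n : ℝ) := by
    have : 0 < n := Nat.pos_of_ne_zero (fun h => by subst h; exact j.elim0)
    exact_mod_cast this
  have hq1' : q < 1 := lt_of_le_of_ne hq1 hqne
  set c : Fin n → ℝ := fun i => q * (f₁ (z i) - f₀ (z i)) + f₀ (z i) with hc
  have hcpos : ∀ i, 0 < c i := by
    intro i
    have : c i = q * f₁ (z i) + (1 - q) * f₀ (z i) := by ring
    rw [this]
    have h1 : 0 ≤ q * f₁ (z i) := mul_nonneg hq0 (hf₁ i).le
    have h2 : 0 < (1 - q) * f₀ (z i) := mul_pos (by linarith) (hf₀ i)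
    linarith
  -- key: ∑ log (c i / f₁ i) < 0
  have hsumle : ∑ i : Fin n, f₀ (z i) / f₁ (z i) ≤ n := by
    rw [one_div, mul_comm, ← div_eq_mul_inv, div_le_one hn] at hc4b
    exact hc4b
  have hratio : ∀ i, c i / f₁ (z i) - 1 = (1 - q) * (f₀ (z i) / f₁ (z i) - 1) := by
    intro i
    rw [div_sub_one (hf₁ i).ne', div_sub_one (hf₁ i).ne', ← mul_div_assoc, div_eq_div_iff (hf₁ i).ne' (hf₁ i).ne']
    simp only [hc]
    ring
  have hkey : ∑ i : Fin n, Real.log (c i / f₁ (z i)) < 0 := by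
    have hlt : ∑ i : Fin n, Real.log (c i / f₁ (z i)) <
        ∑ i : Fin n, (c i / f₁ (z i) - 1) := by
      apply Finset.sum_lt_sum
      · intro i _
        exact Real.log_le_sub_one_of_pos (div_pos (hcpos i) (hf₁ i))
      · refine ⟨j, Finset.mem_univ j, ?_⟩
        apply Real.log_lt_sub_one_of_pos (div_pos (hcpos j) (hf₁ j))
        intro hone
        have : c j / f₁ (z j) - 1 = 0 := by rw [hone]; ring
        rw [hratio j] at this
        rcases mul_eq_zero.mp this with h | h
        · linarith
        · have : f₀ (z j) / f₁ (z j) = 1 := by linarith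
          have := (div_eq_one_iff_eq (hf₁ j).ne').mp this
          exact hjne this.symm
    have hle : ∑ i : Fin n, (c i / f₁ (z i) - 1) ≤ 0 := by
      have : ∑ i : Fin n, (c i / f₁ (z i) - 1)
          = (1 - q) * (∑ i : Fin n, f₀ (z i) / f₁ (z i) - n) := by
        simp only [hratio]
        rw [← Finset.mul_sum, Finset.sum_sub_distrib]
        simp
      rw [this]
      have : ∑ i : Fin n, f₀ (z i) / f₁ (z i) - n ≤ 0 := by linarith
      exact mul_nonpos_of_nonneg_of_nonpos (by linarith) this
    linarith
  have hprodlt : ∏ i : Fin n, (c i / f₁ (z i)) < 1 := by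
    have := Real.exp_lt_exp.mpr hkey
    rw [Real.exp_sum, Real.exp_zero] at this
    calc ∏ i : Fin n, (c i / f₁ (z i))
        = ∏ i : Fin n, Real.exp (Real.log (c i / f₁ (z i))) := by
          refine Finset.prod_congr rfl fun i _ => ?_
          rw [Real.exp_log (div_pos (hcpos i) (hf₁ i))]
      _ < 1 := this
  have hprodpos : 0 < ∏ i : Fin n, f₁ (z i) :=
    Finset.prod_pos fun i _ => hf₁ i
  rw [Finset.prod_div_distrib, div_lt_one hprodpos] at hprodlt
  calc ∏ i : Fin n, (q * (f₁ (z i) - f₀ (z i)) + f₀ (z i))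
      = ∏ i : Fin n, c i := rfl
    _ < ∏ i : Fin n, f₁ (z i) := hprodlt
    _ = ∏ i : Fin n, ((1 : ℝ) * (f₁ (z i) - f₀ (z i)) + f₀ (z i)) := by
        refine Finset.prod_congr rfl fun i _ => ?_; ring
end
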